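/- arXiv:1611.10165 — 5 statements merged into one kernel-verified Lean document; each statement's English description precedes it below -/
import Mathlib

section
/- Let 0 ≤ α < β be real numbers and p ∈ ℕ. Then there exists a constant c > 0 depending only on α and β (not on p) such that for every polynomial q of degree at most p, ∫_{-1}^{1} (1-x²)^α q(x)² dx ≤ c (p+1)^{2(β-α)} ∫_{-1}^{1} (1-x²)^β q(x)² dx. -/
/-!
Substituting `x = cos t` turns `∫ (1 - x²)^γ q(x)² dx` into `J_{2γ+1}`, where
`J_a = ∫₀^π sin^a t · q(cos t)² dt`. Expanding `q` in Chebyshev polynomials and using their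
orthogonality gives `sup q² ≤ (2(p+1)/π) · J₀` on `[-1, 1]`. Now cut `[0, π]` at distance
`θ₀ ≍ 1/p` from its endpoints: on the two end pieces `sin^a ≤ θ₀^a` and the sup bound applies,
in between `sin^a ≤ (sin θ₀)^(a-b) sin^b`. For `a = 0` the end pieces cost at most `J₀/2`, which
is absorbed, so `J₀ ≲ p^b J_b`; feeding this into the sup bound and cutting again for general `a`
gives `J_a ≲ p^(b-a) J_b`.
-/

open Polynomial Polynomial.Chebyshev MeasureTheory Real

lemma integral_sq_eval_sum_smul_T (s : Finset ℕ) (c : ℕ → ℝ) :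
    ∫ x, (∑ i ∈ s, c i • T ℝ i).eval x ^ 2 ∂measureT
      = ∑ i ∈ s, c i ^ 2 * ∫ x, (T ℝ i).eval x * (T ℝ i).eval x ∂measureT := by
  have hsq : ∀ x, (∑ i ∈ s, c i • T ℝ i).eval x ^ 2
      = ∑ i ∈ s, ∑ j ∈ s, c i * c j * ((T ℝ i).eval x * (T ℝ j).eval x) := fun x ↦ by
    simp_rw [eval_finsetSum, eval_smul, smul_eq_mul, sq, Finset.sum_mul_sum]
    exact Finset.sum_congr rfl fun i _ ↦ Finset.sum_congr rfl fun j _ ↦ by ring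
  have hint : ∀ i j : ℕ, Integrable (fun x ↦ c i * c j * ((T ℝ i).eval x * (T ℝ j).eval x))
      measureT := fun i j ↦ integrable_measureT (by fun_prop)
  simp_rw [hsq]
  rw [integral_finsetSum _ fun i _ ↦ integrable_finsetSum _ fun j _ ↦ hint i j]
  refine Finset.sum_congr rfl fun i hi ↦ ?_
  rw [integral_finsetSum _ fun j _ ↦ hint i j, Finset.sum_eq_single i]
  · rw [integral_const_mul, sq]
  · intro j _ hji
    rw [integral_const_mul, integral_eval_T_real_mul_eval_T_real_measureT_of_ne hji.symm,
      mul_zero]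
  · exact fun h ↦ (h hi).elim

lemma pi_div_two_le_integral_T_mul_self (i : ℕ) :
    π / 2 ≤ ∫ x, (T ℝ i).eval x * (T ℝ i).eval x ∂measureT := by
  rcases eq_or_ne i 0 with rfl | hi
  · rw [Nat.cast_zero, integral_eval_T_real_mul_self_measureT_zero]; linarith [pi_pos]
  · rw [integral_T_real_mul_self_measureT_of_ne_zero hi]

lemma sq_eval_le_integral_sq_eval_cos {p : ℕ} {q : ℝ[X]} (hq : q.natDegree ≤ p) {x : ℝ}
    (hx : |x| ≤ 1) :
    q.eval x ^ 2 ≤ 2 * (p + 1) / π * ∫ θ in 0..π, q.eval (cos θ) ^ 2 := by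
  have hmem : q ∈ degreeLT ℝ (p + 1) := by
    rw [mem_degreeLT]
    exact (degree_le_of_natDegree_le hq).trans_lt (by exact_mod_cast p.lt_succ_self)
  rw [← Sequence.span_degreeLT (chebyshevTsequence ℝ) (by simp),
    show Set.Iio (p + 1) = Finset.range (p + 1) by simp,
    Submodule.mem_span_image_finset_iff_exists_fun'] at hmem
  obtain ⟨c, rfl⟩ := hmem
  simp only [chebyshevTsequence]
  set S := ∫ θ in 0..π, (∑ i ∈ Finset.range (p + 1), c i • T ℝ i).eval (cos θ) ^ 2 with hSdef
  have hS : π / 2 * ∑ i ∈ Finset.range (p + 1), c i ^ 2 ≤ S := by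
    rw [hSdef, ← integral_measureT_eq_integral_cos
      (f := fun y ↦ (∑ i ∈ Finset.range (p + 1), c i • T ℝ i).eval y ^ 2),
      integral_sq_eval_sum_smul_T, Finset.mul_sum]
    exact Finset.sum_le_sum fun i _ ↦ by
      rw [mul_comm]
      exact mul_le_mul_of_nonneg_left (pi_div_two_le_integral_T_mul_self i) (sq_nonneg _)
  have habs : |(∑ i ∈ Finset.range (p + 1), c i • T ℝ i).eval x|
      ≤ ∑ i ∈ Finset.range (p + 1), |c i| := by
    simp_rw [eval_finsetSum, eval_smul, smul_eq_mul]
    refine (Finset.abs_sum_le_sum_abs _ _).trans (Finset.sum_le_sum fun i _ ↦ ?_)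
    rw [abs_mul]
    exact mul_le_of_le_one_right (abs_nonneg _) (abs_eval_T_real_le_one _ hx)
  calc (∑ i ∈ Finset.range (p + 1), c i • T ℝ i).eval x ^ 2
      ≤ (∑ i ∈ Finset.range (p + 1), |c i|) ^ 2 := sq_le_sq' (abs_le.mp habs).1 (abs_le.mp habs).2
    _ ≤ (p + 1) * ∑ i ∈ Finset.range (p + 1), c i ^ 2 := by
      simpa using sq_sum_le_card_mul_sum_sq (s := Finset.range (p + 1)) (f := fun i ↦ |c i|)
    _ ≤ 2 * (p + 1) / π * S := by
      rw [div_mul_eq_mul_div, le_div_iff₀ pi_pos]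
      nlinarith

lemma sin_le_sin_of_mem_Icc {θ₀ t : ℝ} (h0 : 0 ≤ θ₀) (ht : t ∈ Set.Icc θ₀ (π - θ₀)) :
    sin θ₀ ≤ sin t := by
  rcases le_total t (π / 2) with h | h
  · exact sin_le_sin_of_le_of_le_pi_div_two (by linarith [pi_pos]) h ht.1
  · rw [← sin_pi_sub t]
    exact sin_le_sin_of_le_of_le_pi_div_two (by linarith [pi_pos]) (by linarith)
      (by linarith [ht.2])

lemma integral_sin_rpow_mul_le {f : ℝ → ℝ} (hf : Continuous f) (hf0 : ∀ t, 0 ≤ f t) {M : ℝ}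
    (hM : ∀ t, f t ≤ M) {a b θ₀ : ℝ} (ha : 0 ≤ a) (hab : a ≤ b) (hθ₀ : 0 < θ₀)
    (hθ₀π : θ₀ ≤ π / 2) :
    ∫ t in 0..π, sin t ^ a * f t
      ≤ 2 * (θ₀ ^ (a + 1) * M) + sin θ₀ ^ (a - b) * ∫ t in 0..π, sin t ^ b * f t := by
  have hint : ∀ γ : ℝ, 0 ≤ γ → ∀ u v, IntervalIntegrable (fun t ↦ sin t ^ γ * f t) volume u v :=
    fun γ hγ u v ↦ (((continuous_rpow_const hγ).comp continuous_sin).mul hf).intervalIntegrable u v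
  have hend : ∀ u, 0 ≤ u → u + θ₀ ≤ π → (∀ t ∈ Set.Ioc u (u + θ₀), sin t ≤ θ₀) →
      ∫ t in u..u + θ₀, sin t ^ a * f t ≤ θ₀ ^ (a + 1) * M := by
    intro u hu huπ hsin
    have hbound : ∀ t ∈ Set.uIoc u (u + θ₀), ‖sin t ^ a * f t‖ ≤ θ₀ ^ a * M := by
      intro t ht
      rw [Set.uIoc_of_le (by linarith)] at ht
      have hs : 0 ≤ sin t :=
        sin_nonneg_of_nonneg_of_le_pi (by linarith [ht.1]) (by linarith [ht.2])
      rw [Real.norm_of_nonneg (mul_nonneg (rpow_nonneg hs a) (hf0 t))]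
      exact mul_le_mul (rpow_le_rpow hs (hsin t ht) ha) (hM t) (hf0 t)
        (rpow_nonneg hθ₀.le a)
    calc ∫ t in u..u + θ₀, sin t ^ a * f t ≤ θ₀ ^ a * M * |u + θ₀ - u| :=
          (le_abs_self _).trans (intervalIntegral.norm_integral_le_of_norm_le_const hbound)
      _ = θ₀ ^ (a + 1) * M := by
          rw [add_sub_cancel_left, abs_of_pos hθ₀, rpow_add_one hθ₀.ne']; ring
  have hleft : ∫ t in 0..θ₀, sin t ^ a * f t ≤ θ₀ ^ (a + 1) * M := by
    simpa using hend 0 le_rfl (by linarith [pi_pos]) fun t ht ↦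
      (sin_le (by linarith [ht.1])).trans (by simpa using ht.2)
  have hright : ∫ t in π - θ₀..π, sin t ^ a * f t ≤ θ₀ ^ (a + 1) * M := by
    simpa using hend (π - θ₀) (by linarith) (by linarith) fun t ht ↦ by
      rw [← sin_pi_sub]
      exact (sin_le (by linarith [ht.2])).trans (by linarith [ht.1])
  have hmid : ∫ t in θ₀..π - θ₀, sin t ^ a * f t
      ≤ sin θ₀ ^ (a - b) * ∫ t in 0..π, sin t ^ b * f t := by
    have hs₀ : 0 < sin θ₀ := sin_pos_of_pos_of_lt_pi hθ₀ (by linarith [pi_pos])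
    calc ∫ t in θ₀..π - θ₀, sin t ^ a * f t
        ≤ ∫ t in θ₀..π - θ₀, sin θ₀ ^ (a - b) * (sin t ^ b * f t) := by
          refine intervalIntegral.integral_mono_on (by linarith) (hint a ha _ _)
            ((hint b (ha.trans hab) _ _).const_mul _) fun t ht ↦ ?_
          have hst := sin_le_sin_of_mem_Icc hθ₀.le ht
          have hs : 0 < sin t := hs₀.trans_le hst
          calc sin t ^ a * f t = sin t ^ (a - b) * (sin t ^ b * f t) := by
                rw [← mul_assoc, ← rpow_add hs, sub_add_cancel]
            _ ≤ sin θ₀ ^ (a - b) * (sin t ^ b * f t) :=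
                mul_le_mul_of_nonneg_right (rpow_le_rpow_of_nonpos hs₀ hst (by linarith))
                  (mul_nonneg (rpow_nonneg hs.le b) (hf0 t))
      _ = sin θ₀ ^ (a - b) * ∫ t in θ₀..π - θ₀, sin t ^ b * f t :=
          intervalIntegral.integral_const_mul _ _
      _ ≤ sin θ₀ ^ (a - b) * ∫ t in 0..π, sin t ^ b * f t := by
          refine mul_le_mul_of_nonneg_left (intervalIntegral.integral_mono_interval hθ₀.le
            (by linarith) (by linarith) ?_ (hint b (ha.trans hab) _ _)) (rpow_nonneg hs₀.le _)
          refine (ae_restrict_mem measurableSet_Ioc).mono fun t ht ↦ ?_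
          exact mul_nonneg (rpow_nonneg (sin_nonneg_of_nonneg_of_le_pi ht.1.le ht.2) b) (hf0 t)
  rw [← intervalIntegral.integral_add_adjacent_intervals (hint a ha 0 θ₀) (hint a ha θ₀ π),
    ← intervalIntegral.integral_add_adjacent_intervals (hint a ha θ₀ (π - θ₀)) (hint a ha _ π)]
  linarith

lemma sin_two_div_rpow_le {r c : ℝ} (hr : 4 ≤ r) (hc : c ≤ 0) : sin (2 / r) ^ c ≤ r ^ (-c) := by
  have hr0 : 0 < r := by linarith
  have hsin : 1 / r ≤ sin (2 / r) := by
    have h := mul_le_sin (x := 2 / r) (by positivity)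
      (by rw [div_le_div_iff₀ hr0 two_pos]; nlinarith [pi_gt_three])
    calc 1 / r ≤ 2 / π * (2 / r) := by
          rw [div_mul_div_comm, div_le_div_iff₀ hr0 (by positivity)]; nlinarith [pi_le_four]
      _ ≤ sin (2 / r) := h
  calc sin (2 / r) ^ c ≤ (1 / r) ^ c := rpow_le_rpow_of_nonpos (by positivity) hsin hc
    _ = r ^ (-c) := by rw [one_div, inv_rpow hr0.le, rpow_neg hr0.le]

lemma integral_sin_rpow_mul_sq_nonneg (γ : ℝ) (g : ℝ → ℝ) :
    0 ≤ ∫ t in 0..π, sin t ^ γ * g t ^ 2 :=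
  intervalIntegral.integral_nonneg pi_pos.le fun _ ht ↦
    mul_nonneg (rpow_nonneg (sin_nonneg_of_nonneg_of_le_pi ht.1 ht.2) γ) (sq_nonneg _)

lemma integral_sq_eval_cos_le {p : ℕ} {q : ℝ[X]} (hq : q.natDegree ≤ p) {b : ℝ} (hb : 0 ≤ b) :
    ∫ t in 0..π, q.eval (cos t) ^ 2
      ≤ 2 * (8 * (p + 1)) ^ b * ∫ t in 0..π, sin t ^ b * q.eval (cos t) ^ 2 := by
  set r : ℝ := 8 * (p + 1) with hr
  have hr4 : 4 ≤ r := by rw [hr]; linarith [(p.cast_nonneg : (0 : ℝ) ≤ p)]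
  set S := ∫ t in 0..π, q.eval (cos t) ^ 2
  have hS : 0 ≤ S := intervalIntegral.integral_nonneg pi_pos.le fun _ _ ↦ sq_nonneg _
  have hsplit := integral_sin_rpow_mul_le (f := fun t ↦ q.eval (cos t) ^ 2) (by fun_prop)
    (fun _ ↦ sq_nonneg _) (M := 2 * (p + 1) / π * S)
    (fun t ↦ sq_eval_le_integral_sq_eval_cos hq (abs_cos_le_one t)) le_rfl hb
    (θ₀ := 2 / r) (by positivity)
    (by rw [div_le_div_iff₀ (by positivity) two_pos]; nlinarith [pi_gt_three])
  simp only [rpow_zero, one_mul, zero_add, rpow_one, zero_sub] at hsplit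
  have hend : 2 * (2 / r * (2 * (p + 1) / π * S)) ≤ S / 2 := by
    rw [show 2 * (2 / r * (2 * (p + 1) / π * S)) = S / π by rw [hr]; field_simp; ring]
    exact div_le_div_of_nonneg_left hS two_pos (by linarith [pi_gt_three])
  have hmid := mul_le_mul_of_nonneg_right (sin_two_div_rpow_le hr4 (neg_nonpos.mpr hb))
    (integral_sin_rpow_mul_sq_nonneg b (fun t ↦ q.eval (cos t)))
  rw [neg_neg] at hmid
  linarith

lemma sq_eval_le_integral_sin_rpow_mul {p : ℕ} {q : ℝ[X]} (hq : q.natDegree ≤ p) {b : ℝ}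
    (hb : 0 ≤ b) {x : ℝ} (hx : |x| ≤ 1) :
    q.eval x ^ 2 ≤ (8 * (p + 1)) ^ (b + 1) * ∫ t in 0..π, sin t ^ b * q.eval (cos t) ^ 2 := by
  set J := ∫ t in 0..π, sin t ^ b * q.eval (cos t) ^ 2
  have hJ : 0 ≤ J := integral_sin_rpow_mul_sq_nonneg b _
  calc q.eval x ^ 2 ≤ 2 * (p + 1) / π * (2 * (8 * (p + 1)) ^ b * J) :=
        (sq_eval_le_integral_sq_eval_cos hq hx).trans
          (mul_le_mul_of_nonneg_left (integral_sq_eval_cos_le hq hb) (by positivity))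
    _ = 4 / π * (p + 1) * ((8 * (p + 1)) ^ b * J) := by ring
    _ ≤ 8 * (p + 1) * ((8 * (p + 1)) ^ b * J) := by
        gcongr
        rw [div_le_iff₀ pi_pos]; nlinarith [pi_gt_three]
    _ = (8 * (p + 1)) ^ (b + 1) * J := by
        rw [rpow_add_one (by positivity)]; ring

lemma integral_sin_rpow_mul_sq_eval_cos_le {p : ℕ} {q : ℝ[X]} (hq : q.natDegree ≤ p) {a b : ℝ}
    (ha : 0 ≤ a) (hab : a ≤ b) :
    ∫ t in 0..π, sin t ^ a * q.eval (cos t) ^ 2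
      ≤ (2 ^ (a + 2) + 1) * (8 * (p + 1)) ^ (b - a)
        * ∫ t in 0..π, sin t ^ b * q.eval (cos t) ^ 2 := by
  set r : ℝ := 8 * (p + 1) with hr
  have hr4 : 4 ≤ r := by rw [hr]; linarith [(p.cast_nonneg : (0 : ℝ) ≤ p)]
  have hr0 : 0 < r := by linarith
  set J := ∫ t in 0..π, sin t ^ b * q.eval (cos t) ^ 2
  have hJ : 0 ≤ J := integral_sin_rpow_mul_sq_nonneg b _
  have hsplit := integral_sin_rpow_mul_le (f := fun t ↦ q.eval (cos t) ^ 2) (by fun_prop)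
    (fun _ ↦ sq_nonneg _) (M := r ^ (b + 1) * J)
    (fun t ↦ sq_eval_le_integral_sin_rpow_mul hq (ha.trans hab) (abs_cos_le_one t)) ha hab
    (θ₀ := 2 / r) (by positivity)
    (by rw [div_le_div_iff₀ hr0 two_pos]; nlinarith [pi_gt_three])
  have hend : 2 * ((2 / r) ^ (a + 1) * (r ^ (b + 1) * J)) = 2 ^ (a + 2) * r ^ (b - a) * J := by
    rw [div_rpow two_pos.le hr0.le, show a + 2 = a + 1 + 1 by ring,
      rpow_add_one two_ne_zero (a + 1), show b - a = b + 1 - (a + 1) by ring, rpow_sub hr0]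
    field_simp
  have hmid := mul_le_mul_of_nonneg_right (sin_two_div_rpow_le hr4 (sub_nonpos.mpr hab)) hJ
  rw [neg_sub] at hmid
  linarith

lemma integral_one_sub_sq_rpow_mul {γ : ℝ} (hγ : 0 ≤ γ) {g : ℝ → ℝ} (hg : Continuous g) :
    ∫ x in -1..1, (1 - x ^ 2) ^ γ * g x = ∫ t in 0..π, sin t ^ (2 * γ + 1) * g (cos t) := by
  have hsubst := intervalIntegral.integral_comp_mul_deriv (a := 0) (b := π)
    (fun t _ ↦ hasDerivAt_cos t) (by fun_prop)
    (((continuous_rpow_const hγ).comp (by fun_prop : Continuous fun x : ℝ ↦ 1 - x ^ 2)).mul hg)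
  rw [cos_zero, cos_pi, intervalIntegral.integral_symm (-1) 1] at hsubst
  simp only [Function.comp_apply, Pi.mul_apply] at hsubst
  rw [← neg_neg (∫ x in -1..1, _), ← hsubst, ← intervalIntegral.integral_neg]
  refine intervalIntegral.integral_congr fun t ht ↦ ?_
  rw [Set.uIcc_of_le pi_pos.le] at ht
  have hs : 0 ≤ sin t := sin_nonneg_of_nonneg_of_le_pi ht.1 ht.2
  rw [← sin_sq, ← rpow_natCast, ← rpow_mul hs, rpow_add_one' hs (by positivity)]
  push_cast
  ring

theorem stmt_0 (α β : ℝ) (hα : 0 ≤ α) (hαβ : α < β) :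
    ∃ c > 0, ∀ (p : ℕ) (q : Polynomial ℝ), q.natDegree ≤ p →
      ∫ x in (-1:ℝ)..1, (1 - x^2)^α * (q.eval x)^2
        ≤ c * ((p : ℝ) + 1)^(2*(β - α)) * ∫ x in (-1:ℝ)..1, (1 - x^2)^β * (q.eval x)^2 := by
  refine ⟨(2 ^ (2 * α + 1 + 2) + 1) * 8 ^ (2 * (β - α)), by positivity, fun p q hq ↦ ?_⟩
  have hg : Continuous fun x ↦ q.eval x ^ 2 := by fun_prop
  rw [integral_one_sub_sq_rpow_mul hα hg, integral_one_sub_sq_rpow_mul (hα.trans hαβ.le) hg]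
  have h := integral_sin_rpow_mul_sq_eval_cos_le hq (a := 2 * α + 1) (b := 2 * β + 1)
    (by linarith) (by linarith)
  rwa [show 2 * β + 1 - (2 * α + 1) = 2 * (β - α) by ring,
    mul_rpow (by norm_num) (by positivity), ← mul_assoc] at h
end

section
/- For fixed α ≥ 0, the function g(n) = Γ(n+α+1)² / (Γ(n+1) Γ(n+2α+1)) is monotonically increasing in n ∈ ℕ, n ≥ 1, and lim_{n→∞} g(n) = 1. -/
/-!
With `g(x) = Γ(x+α+1)² / (Γ(x+1) Γ(x+2α+1))`, the functional equation of `Γ` gives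
`g(x+1) = (x+α+1)² / ((x+1)(x+2α+1)) · g(x)`, and this factor is at least `1` because the
numerator exceeds the denominator by `α²`. For the limit, Euler's limit formula for `Γ` yields
`n^β Γ(n+1) / Γ(n+β+1) → 1` for every `β ≥ 0`, and `g(n)` is the value of this ratio at `β = 2α`
divided by the square of its value at `β = α`.
-/

open Filter Topology

namespace Real

theorem Gamma_add_nat_add_one_eq_mul_prod {β : ℝ} (hβ : 0 < β) (n : ℕ) :
    Gamma (β + n + 1) = Gamma β * ∏ j ∈ Finset.range (n + 1), (β + j) := by
  induction n with
  | zero => simp [Gamma_add_one hβ.ne', mul_comm]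
  | succ n ih =>
    rw [Finset.prod_range_succ, ← mul_assoc, ← ih, Nat.cast_succ,
      show β + (n + 1) + 1 = β + n + 1 + 1 by ring, Gamma_add_one (by positivity)]
    ring

theorem tendsto_rpow_mul_Gamma_add_one_div_Gamma_add {β : ℝ} (hβ : 0 ≤ β) :
    Tendsto (fun n : ℕ => (n : ℝ) ^ β * Gamma (n + 1) / Gamma (n + β + 1)) atTop (𝓝 1) := by
  rcases hβ.eq_or_lt with rfl | hβpos
  · refine tendsto_const_nhds.congr fun n => ?_
    have hΓn : Gamma (n + 1) ≠ 0 := (Gamma_pos_of_pos (by positivity)).ne'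
    simp [hΓn]
  have hΓ : Gamma β ≠ 0 := (Gamma_pos_of_pos hβpos).ne'
  have h := (GammaSeq_tendsto_Gamma β).div_const (Gamma β)
  rw [div_self hΓ] at h
  refine h.congr fun n => ?_
  have hprod : ∏ j ∈ Finset.range (n + 1), (β + j) = Gamma (β + n + 1) / Gamma β := by
    rw [Gamma_add_nat_add_one_eq_mul_prod hβpos n]; field_simp
  rw [GammaSeq, hprod, ← Gamma_nat_eq_factorial,
    show (n : ℝ) + β + 1 = β + n + 1 by ring]
  field_simp

end Real

open Real

noncomputable def gammaRatio (α x : ℝ) : ℝ :=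
  Gamma (x + α + 1) ^ 2 / (Gamma (x + 1) * Gamma (x + 2 * α + 1))

section gammaRatio

variable {α x : ℝ}

theorem gammaRatio_add_one (hx : 0 < x + 1) (hxα : 0 < x + 2 * α + 1) :
    gammaRatio α (x + 1) = (x + α + 1) ^ 2 / ((x + 1) * (x + 2 * α + 1)) * gammaRatio α x := by
  have hmid : 0 < x + α + 1 := by linarith
  rw [gammaRatio, gammaRatio, show x + 1 + α + 1 = x + α + 1 + 1 by ring,
    show x + 1 + 2 * α + 1 = x + 2 * α + 1 + 1 by ring, Gamma_add_one hx.ne',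
    Gamma_add_one hxα.ne', Gamma_add_one hmid.ne']
  field_simp

theorem gammaRatio_nonneg (hx : 0 < x + 1) (hxα : 0 < x + 2 * α + 1) : 0 ≤ gammaRatio α x :=
  div_nonneg (sq_nonneg _) (mul_pos (Gamma_pos_of_pos hx) (Gamma_pos_of_pos hxα)).le

theorem gammaRatio_le_add_one (hx : 0 < x + 1) (hxα : 0 < x + 2 * α + 1) :
    gammaRatio α x ≤ gammaRatio α (x + 1) := by
  rw [gammaRatio_add_one hx hxα]
  refine le_mul_of_one_le_left (gammaRatio_nonneg hx hxα) ((one_le_div (by positivity)).mpr ?_)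
  nlinarith [sq_nonneg α]

theorem monotone_gammaRatio_natCast (hα : 0 ≤ α) : Monotone fun n : ℕ => gammaRatio α n :=
  monotone_nat_of_le_succ fun n => by
    simpa only [Nat.cast_succ] using gammaRatio_le_add_one (x := n) (by positivity) (by positivity)

theorem gammaRatio_eq_div_sq (hx : 0 < x) :
    gammaRatio α x = (x ^ (2 * α) * Gamma (x + 1) / Gamma (x + 2 * α + 1)) /
      (x ^ α * Gamma (x + 1) / Gamma (x + α + 1)) ^ 2 := by
  have hpow : x ^ α ≠ 0 := (rpow_pos_of_pos hx α).ne'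
  rw [gammaRatio, mul_comm 2 α, rpow_mul hx.le, rpow_two]
  field_simp

theorem tendsto_gammaRatio_natCast (hα : 0 ≤ α) :
    Tendsto (fun n : ℕ => gammaRatio α n) atTop (𝓝 1) := by
  have h := (tendsto_rpow_mul_Gamma_add_one_div_Gamma_add (by positivity : 0 ≤ 2 * α)).div
    ((tendsto_rpow_mul_Gamma_add_one_div_Gamma_add hα).pow 2) (by norm_num)
  rw [one_pow, div_one] at h
  refine h.congr' ?_
  filter_upwards [eventually_gt_atTop 0] with n hn
  exact (gammaRatio_eq_div_sq (Nat.cast_pos.mpr hn)).symm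

end gammaRatio

theorem stmt_3 (α : ℝ) (hα : 0 ≤ α) :
    (∀ n m : ℕ, 1 ≤ n → n ≤ m →
      Real.Gamma ((n : ℝ) + α + 1)^2 / (Real.Gamma ((n : ℝ) + 1) * Real.Gamma ((n : ℝ) + 2*α + 1))
        ≤ Real.Gamma ((m : ℝ) + α + 1)^2 / (Real.Gamma ((m : ℝ) + 1) * Real.Gamma ((m : ℝ) + 2*α + 1)))
    ∧ Filter.Tendsto
        (fun n : ℕ => Real.Gamma ((n : ℝ) + α + 1)^2
          / (Real.Gamma ((n : ℝ) + 1) * Real.Gamma ((n : ℝ) + 2*α + 1)))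
        Filter.atTop (nhds 1) :=
  ⟨fun _ _ _ hnm => monotone_gammaRatio_natCast hα hnm, tendsto_gammaRatio_natCast hα⟩
end

section
/- For all integers n ≥ k ≥ 0, ∫_{-1}^{1} (1-x²)^k (L_n^{(k)}(x))² dx = (2/(2n+1)) · (n+k)!/(n-k)!, where L_n^{(k)} denotes the k-th derivative of the n-th Legendre polynomial; the integral vanishes when n < k. -/
/-!
Orthogonality forces Legendre's equation: `E = ((1 - x²) L_n')' + n(n+1) L_n` has degree `< n`
(the top coefficients cancel) and, the Sturm–Liouville operator being symmetric on `[-1, 1]`, is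
orthogonal to every `L_m` with `m < n`; hence `⟪E, E⟫ = 0` and `E = 0`.
Differentiating the equation `k` times gives
`((1 - x²)^(k+1) L_n^(k+1))' = -(n - k)(n + k + 1) (1 - x²)^k L_n^(k)`, so an integration by parts,
whose boundary terms vanish at `±1`, yields `J_(k+1) = (n - k)(n + k + 1) J_k` for
`J_k = ∫ (1 - x²)^k (L_n^(k))²`, i.e. `J_k = J_0 (n + k)! / (n - k)!`.
Evaluating the differentiated equation at `x = 1` and using `L_n(1) = 1` shows that the constant
`L_n^(n)` equals `(2n)! / (2^n n!)`; together with `∫ (1 - x²)^n = 2^(2n+1) (n!)² / (2n+1)!` this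
makes `J_n` explicit, and `J_0 = J_n / (2n)! = 2 / (2n + 1)`.
-/

open MeasureTheory Polynomial

open scoped Nat

section Algebra

variable {R : Type*} [CommRing R]

noncomputable def legendreOp (p : R[X]) : R[X] :=
  derivative ((1 - X ^ 2) * derivative p)

theorem coeff_legendreOp (p : R[X]) (n : ℕ) :
    (legendreOp p).coeff n =
      (n + 2) * (n + 1) * p.coeff (n + 2) - n * (n + 1) * p.coeff n := by
  have hX : (X ^ 2 * derivative p).coeff (n + 1) = n * p.coeff n := by
    rw [pow_two, mul_assoc, coeff_X_mul]
    rcases n with _ | n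
    · simp
    · rw [coeff_X_mul, coeff_derivative]
      push_cast
      ring
  rw [legendreOp, sub_mul, one_mul, derivative_sub, coeff_sub, coeff_derivative, coeff_derivative,
    coeff_derivative, hX]
  push_cast
  ring

theorem degree_legendreOp_lt {p : R[X]} {n : ℕ} (hp : p.degree < n) :
    (legendreOp p).degree < n := by
  rw [degree_lt_iff_coeff_zero] at hp ⊢
  intro m hm
  rw [coeff_legendreOp, hp m hm, hp (m + 2) (by omega)]
  ring

theorem legendre_ode_iterate_derivative {p : R[X]} {c : R} (h : legendreOp p = -C c * p)
    (k : ℕ) :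
    (1 - X ^ 2) * derivative^[k + 2] p - C (2 * (k + 1) : R) * X * derivative^[k + 1] p
      + C (c - k * (k + 1)) * derivative^[k] p = 0 := by
  induction k with
  | zero =>
    simp only [legendreOp, derivative_mul, derivative_sub, derivative_one, derivative_X_sq] at h
    simp only [Function.iterate_succ_apply', Function.iterate_zero_apply, Nat.cast_zero]
    simp only [map_sub, map_mul, map_add, map_ofNat, map_one, map_zero] at h ⊢
    linear_combination h
  | succ k ih =>
    have h' := congrArg derivative ih
    simp only [derivative_add, derivative_sub, derivative_mul, derivative_one, derivative_X_sq,
      derivative_X, derivative_C, derivative_zero,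
      ← Function.iterate_succ_apply' derivative] at h'
    simp only [map_sub, map_mul, map_add, map_natCast, map_ofNat, map_one] at h' ⊢
    push_cast at h' ⊢
    linear_combination h'

theorem derivative_one_sub_X_sq_pow_mul_iterate_derivative {p : R[X]} {c : R}
    (h : legendreOp p = -C c * p) (k : ℕ) :
    derivative ((1 - X ^ 2) ^ (k + 1) * derivative^[k + 1] p) =
      -C (c - k * (k + 1)) * ((1 - X ^ 2) ^ k * derivative^[k] p) := by
  rw [derivative_mul, derivative_pow, ← Function.iterate_succ_apply' derivative]
  simp only [derivative_sub, derivative_one, derivative_X_sq, Nat.add_sub_cancel]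
  have hk := legendre_ode_iterate_derivative h k
  simp only [map_sub, map_mul, map_add, map_natCast, map_ofNat, map_one] at hk ⊢
  push_cast at hk ⊢
  linear_combination (1 - X ^ 2) ^ k * hk

theorem eval_one_iterate_derivative_succ {p : R[X]} {c : R} (h : legendreOp p = -C c * p)
    (k : ℕ) :
    2 * (k + 1) * (derivative^[k + 1] p).eval 1 =
      (c - k * (k + 1)) * (derivative^[k] p).eval 1 := by
  have h1 := congrArg (eval 1) (legendre_ode_iterate_derivative h k)
  simp only [eval_add, eval_sub, eval_mul, eval_pow, eval_one, eval_X, eval_C, eval_zero] at h1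
  linear_combination -h1

theorem mul_factorial_sub_eq_of_succ_eq {f : ℕ → R} {n : ℕ}
    (hf : ∀ k < n, f (k + 1) = (n - k) * (n + k + 1) * f k) {k : ℕ} (hk : k ≤ n) :
    f k * (n - k)! = f 0 * (n + k)! := by
  induction k with
  | zero => simp
  | succ k ih =>
    have hsub : ((n - k)! : R) = (n - k) * (n - (k + 1))! := by
      rw [show n - k = n - (k + 1) + 1 by omega, Nat.factorial_succ, Nat.cast_mul,
        Nat.cast_add_one, Nat.cast_sub (by omega)]
      push_cast
      ring
    have hadd : ((n + (k + 1))! : R) = (n + k + 1) * (n + k)! := by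
      rw [← add_assoc, Nat.factorial_succ]
      push_cast
      ring
    have ih' := ih (by omega)
    rw [hsub] at ih'
    rw [hf k (by omega), hadd]
    linear_combination (n + k + 1 : R) * ih'

theorem eval_one_iterate_derivative_mul_factorial {p : R[X]} {n : ℕ}
    (h : legendreOp p = -C ((n : R) * (n + 1)) * p) {k : ℕ} (hk : k ≤ n) :
    (derivative^[k] p).eval 1 * 2 ^ k * k ! * (n - k)! = p.eval 1 * (n + k)! := by
  refine (mul_factorial_sub_eq_of_succ_eq (f := fun k => (derivative^[k] p).eval 1 * 2 ^ k * k !)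
    (fun k _ => ?_) hk).trans (by simp)
  have hk := eval_one_iterate_derivative_succ h k
  rw [pow_succ, Nat.factorial_succ]
  push_cast
  linear_combination (2 ^ k * k ! : R) * hk

end Algebra

theorem Polynomial.Sequence.map_eq_zero_of_degree_lt {K M : Type*} [Field K] [AddCommGroup M]
    [Module K M] (S : Sequence K) (f : K[X] →ₗ[K] M) {n : ℕ} (hf : ∀ m < n, f (S m) = 0)
    {q : K[X]} (hq : q.degree < n) : f q = 0 := by
  have hspan : Submodule.span K (S '' Set.Iio n) ≤ LinearMap.ker f :=
    Submodule.span_le.2 <| Set.image_subset_iff.2 fun m hm => hf m hm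
  rw [S.span_degreeLT fun i _ => by simp] at hspan
  exact hspan (mem_degreeLT.2 hq)

theorem intervalIntegrable_eval_mul_eval (p q : ℝ[X]) (a b : ℝ) :
    IntervalIntegrable (fun x => p.eval x * q.eval x) volume a b :=
  (p.continuous.mul q.continuous).intervalIntegrable a b

noncomputable def legendreInner : ℝ[X] →ₗ[ℝ] ℝ[X] →ₗ[ℝ] ℝ :=
  LinearMap.mk₂ ℝ (fun p q => ∫ x in (-1 : ℝ)..1, p.eval x * q.eval x)
    (fun p₁ p₂ q => by
      simp only [eval_add, add_mul]
      exact intervalIntegral.integral_add (intervalIntegrable_eval_mul_eval _ _ _ _)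
        (intervalIntegrable_eval_mul_eval _ _ _ _))
    (fun c p q => by
      simp only [eval_smul, smul_eq_mul, mul_assoc, intervalIntegral.integral_const_mul])
    (fun p q₁ q₂ => by
      simp only [eval_add, mul_add]
      exact intervalIntegral.integral_add (intervalIntegrable_eval_mul_eval _ _ _ _)
        (intervalIntegrable_eval_mul_eval _ _ _ _))
    (fun c p q => by
      simp only [eval_smul, smul_eq_mul, mul_left_comm _ c, intervalIntegral.integral_const_mul])

@[simp]
theorem legendreInner_apply (p q : ℝ[X]) :
    legendreInner p q = ∫ x in (-1 : ℝ)..1, p.eval x * q.eval x := rfl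

theorem legendreInner_comm (p q : ℝ[X]) : legendreInner p q = legendreInner q p := by
  simp only [legendreInner_apply, mul_comm]

theorem eq_zero_of_legendreInner_self {p : ℝ[X]} (h : legendreInner p p = 0) : p = 0 := by
  by_contra hp
  have hroots : volume {x | p.IsRoot x} = 0 := (finite_setOfPred_isRoot hp).measure_zero _
  have hpos : 0 < legendreInner p p := by
    rw [legendreInner_apply, intervalIntegral.integral_pos_iff_support_of_nonneg_ae
      (Filter.Eventually.of_forall fun x => mul_self_nonneg _)
      (intervalIntegrable_eval_mul_eval _ _ _ _)]
    refine ⟨by norm_num, ?_⟩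
    calc (0 : ENNReal) < volume (Set.Ioc (-1 : ℝ) 1 \ {x | p.IsRoot x}) := by
          rw [measure_sdiff_null hroots]; simp
      _ ≤ volume (Function.support (fun x => p.eval x * p.eval x) ∩ Set.Ioc (-1 : ℝ) 1) :=
          measure_mono fun x hx => ⟨mul_self_ne_zero.2 hx.2, hx.1⟩
  exact hpos.ne' h

theorem integral_eval_mul_eval_derivative (p q : ℝ[X]) (a b : ℝ) :
    ∫ x in a..b, p.eval x * (derivative q).eval x =
      p.eval b * q.eval b - p.eval a * q.eval a - ∫ x in a..b, (derivative p).eval x * q.eval x :=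
  intervalIntegral.integral_mul_deriv_eq_deriv_mul (fun x _ => p.hasDerivAt x)
    (fun x _ => q.hasDerivAt x) ((derivative p).continuous.intervalIntegrable a b)
    ((derivative q).continuous.intervalIntegrable a b)

theorem legendreInner_legendreOp (p q : ℝ[X]) :
    legendreInner (legendreOp p) q =
      -∫ x in (-1 : ℝ)..1, (1 - x ^ 2) * (derivative p).eval x * (derivative q).eval x := by
  rw [legendreInner_comm, legendreInner_apply, legendreOp, integral_eval_mul_eval_derivative]
  simp only [eval_mul, eval_sub, eval_one, eval_pow, eval_X, one_pow, neg_one_sq, sub_self,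
    zero_mul, mul_zero, zero_sub]
  simp only [mul_comm]

theorem legendreInner_legendreOp_comm (p q : ℝ[X]) :
    legendreInner (legendreOp p) q = legendreInner p (legendreOp q) := by
  rw [legendreInner_comm p, legendreInner_legendreOp, legendreInner_legendreOp]
  simp only [mul_right_comm]

theorem legendreOp_eq_of_orthogonal (S : Sequence ℝ)
    (horth : ∀ k l, k ≠ l → legendreInner (S k) (S l) = 0) (n : ℕ) :
    legendreOp (S n) = -C ((n : ℝ) * (n + 1)) * S n := by
  set E := legendreOp (S n) + C ((n : ℝ) * (n + 1)) * S n
  have hE_degree : E.degree < n := by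
    have hcoeff : ∀ i > n, (S n).coeff i = 0 := fun i hi =>
      coeff_eq_zero_of_natDegree_lt (by simpa using hi)
    rw [degree_lt_iff_coeff_zero]
    intro m hm
    simp only [E, coeff_add, coeff_C_mul, coeff_legendreOp, hcoeff (m + 2) (by omega)]
    rcases hm.eq_or_lt with rfl | hm
    · ring
    · rw [hcoeff m hm]
      ring
  have hS_orth : ∀ m < n, legendreInner (S n) (S m) = 0 := fun m hm => horth n m hm.ne'
  have hE_orth : ∀ m < n, legendreInner E (S m) = 0 := by
    intro m hm
    rw [map_add, ← smul_eq_C_mul, map_smul, LinearMap.add_apply, LinearMap.smul_apply,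
      legendreInner_legendreOp_comm, hS_orth m hm, smul_zero, add_zero]
    exact S.map_eq_zero_of_degree_lt _ hS_orth (degree_legendreOp_lt (by simpa using hm))
  have hE : E = 0 :=
    eq_zero_of_legendreInner_self (S.map_eq_zero_of_degree_lt _ hE_orth hE_degree)
  linear_combination hE

theorem integral_one_sub_sq_pow_succ (n : ℕ) :
    (2 * n + 3 : ℝ) * ∫ x in (-1 : ℝ)..1, (1 - x ^ 2) ^ (n + 1) =
      (2 * n + 2 : ℝ) * ∫ x in (-1 : ℝ)..1, (1 - x ^ 2) ^ n := by
  have hibp := integral_eval_mul_eval_derivative X ((1 - X ^ 2) ^ (n + 1)) (-1) 1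
  have hcont : ∀ m : ℕ, IntervalIntegrable (fun x : ℝ => (1 - x ^ 2) ^ m) volume (-1) 1 :=
    fun m => by apply Continuous.intervalIntegrable; fun_prop
  have hlhs : ∫ x in (-1 : ℝ)..1, X.eval x * (derivative ((1 - X ^ 2) ^ (n + 1))).eval x =
      (2 * n + 2 : ℝ) * ((∫ x in (-1 : ℝ)..1, (1 - x ^ 2) ^ (n + 1)) -
        ∫ x in (-1 : ℝ)..1, (1 - x ^ 2) ^ n) := by
    rw [← intervalIntegral.integral_sub (hcont _) (hcont _),
      ← intervalIntegral.integral_const_mul]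
    refine intervalIntegral.integral_congr fun x _ => ?_
    simp only [derivative_pow, derivative_sub, derivative_one, derivative_X, eval_mul, eval_pow,
      eval_sub, eval_one, eval_X, eval_C, Nat.add_sub_cancel, eval_zero]
    push_cast
    ring
  rw [hlhs] at hibp
  simp only [derivative_X, eval_one, one_mul, eval_X, eval_pow, eval_sub, one_pow, neg_one_sq,
    sub_self, zero_pow n.succ_ne_zero, mul_zero, zero_sub] at hibp
  linear_combination hibp

theorem integral_one_sub_sq_pow_mul_factorial (n : ℕ) :
    (∫ x in (-1 : ℝ)..1, (1 - x ^ 2) ^ n) * (2 * n + 1)! =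
      2 ^ (2 * n + 1) * (n ! : ℝ) ^ 2 := by
  induction n with
  | zero => norm_num
  | succ n ih =>
    have hrec := integral_one_sub_sq_pow_succ n
    have hfac : ((2 * (n + 1) + 1)! : ℝ) = (2 * n + 3) * (2 * n + 2) * (2 * n + 1)! := by
      rw [show 2 * (n + 1) + 1 = 2 * n + 1 + 1 + 1 by ring, Nat.factorial_succ, Nat.factorial_succ]
      push_cast
      ring
    rw [hfac, Nat.factorial_succ n]
    push_cast
    linear_combination (2 * n + 2 : ℝ) * (2 * n + 1)! * hrec + (2 * n + 2 : ℝ) ^ 2 * ih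

noncomputable def weightedSqNorm (p : ℝ[X]) (k : ℕ) : ℝ :=
  ∫ x in (-1 : ℝ)..1, (1 - x ^ 2) ^ k * ((derivative^[k] p).eval x) ^ 2

theorem weightedSqNorm_succ {p : ℝ[X]} {c : ℝ} (h : legendreOp p = -C c * p) (k : ℕ) :
    weightedSqNorm p (k + 1) = (c - k * (k + 1)) * weightedSqNorm p k := by
  have hibp := integral_eval_mul_eval_derivative ((1 - X ^ 2) ^ (k + 1) * derivative^[k + 1] p)
    (derivative^[k] p) (-1) 1
  rw [← Function.iterate_succ_apply' derivative,
    derivative_one_sub_X_sq_pow_mul_iterate_derivative h] at hibp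
  simp only [eval_mul, eval_neg, eval_C, eval_pow, eval_sub, eval_one, eval_X, one_pow,
    neg_one_sq, sub_self, zero_pow k.succ_ne_zero, zero_mul, zero_sub] at hibp
  rw [weightedSqNorm, weightedSqNorm, ← intervalIntegral.integral_const_mul]
  convert hibp using 1
  · refine intervalIntegral.integral_congr fun x _ => ?_
    ring
  · rw [← intervalIntegral.integral_neg]
    refine intervalIntegral.integral_congr fun x _ => ?_
    ring

theorem weightedSqNorm_mul_factorial {p : ℝ[X]} {n : ℕ}
    (h : legendreOp p = -C ((n : ℝ) * (n + 1)) * p) {k : ℕ} (hk : k ≤ n) :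
    weightedSqNorm p k * (n - k)! = weightedSqNorm p 0 * (n + k)! :=
  mul_factorial_sub_eq_of_succ_eq (fun k _ => by rw [weightedSqNorm_succ h]; ring) hk

theorem weightedSqNorm_zero {p : ℝ[X]} {n : ℕ} (hdeg : p.natDegree = n) (hone : p.eval 1 = 1)
    (h : legendreOp p = -C ((n : ℝ) * (n + 1)) * p) :
    weightedSqNorm p 0 = 2 / (2 * n + 1) := by
  have hconst : ∀ x, (derivative^[n] p).eval x = (derivative^[n] p).eval 1 := by
    obtain ⟨a, ha⟩ :=
      natDegree_eq_zero.1 (by simpa [hdeg] using natDegree_iterate_derivative p n)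
    simp [← ha]
  have hJn : weightedSqNorm p n =
      (derivative^[n] p).eval 1 ^ 2 * ∫ x in (-1 : ℝ)..1, (1 - x ^ 2) ^ n := by
    rw [weightedSqNorm, ← intervalIntegral.integral_const_mul]
    simp only [hconst, mul_comm]
  have hJ := weightedSqNorm_mul_factorial h le_rfl
  have hv := eval_one_iterate_derivative_mul_factorial h le_rfl
  have hI := integral_one_sub_sq_pow_mul_factorial n
  have hfac : ((2 * n + 1)! : ℝ) = (2 * n + 1) * (2 * n)! := by
    rw [Nat.factorial_succ]
    push_cast
    ring
  rw [Nat.sub_self, ← two_mul, hJn, Nat.factorial_zero, Nat.cast_one, mul_one] at hJ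
  rw [Nat.sub_self, ← two_mul, hone, Nat.factorial_zero, Nat.cast_one, mul_one, one_mul] at hv
  rw [hfac] at hI
  have hpos : (0 : ℝ) < (2 * n)! := by positivity
  rw [eq_div_iff (by positivity)]
  refine mul_right_cancel₀ (pow_ne_zero 2 hpos.ne') ?_
  linear_combination -(2 * n + 1 : ℝ) * (2 * n)! * hJ + (derivative^[n] p).eval 1 ^ 2 * hI
    + 2 * ((derivative^[n] p).eval 1 * 2 ^ n * n ! + (2 * n)!) * hv

theorem stmt_6 (L : ℕ → Polynomial ℝ)
    (hdeg : ∀ k, (L k).natDegree = k)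
    (horth : ∀ k l, k ≠ l → ∫ x in (-1:ℝ)..1, (L k).eval x * (L l).eval x = 0)
    (hnorm1 : ∀ k, (L k).eval 1 = 1) :
    ∀ n k : ℕ,
      (k ≤ n →
        ∫ x in (-1:ℝ)..1, (1 - x^2)^k * ((Polynomial.derivative^[k] (L n)).eval x)^2
          = (2 / (2*(n : ℝ) + 1)) * ((Nat.factorial (n + k) : ℝ) / (Nat.factorial (n - k) : ℝ)))
      ∧ (n < k →
        ∫ x in (-1:ℝ)..1, (1 - x^2)^k * ((Polynomial.derivative^[k] (L n)).eval x)^2 = 0) := by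
  have hne : ∀ k, L k ≠ 0 := fun k h0 => by simpa [h0] using hnorm1 k
  let S : Sequence ℝ := ⟨L, fun k => by rw [degree_eq_natDegree (hne k), hdeg]⟩
  have hode : ∀ n, legendreOp (L n) = -C ((n : ℝ) * (n + 1)) * L n :=
    legendreOp_eq_of_orthogonal S horth
  intro n k
  refine ⟨fun hkn => ?_, fun hnk => ?_⟩
  · have hk := weightedSqNorm_mul_factorial (hode n) hkn
    rw [weightedSqNorm_zero (hdeg n) (hnorm1 n) (hode n)] at hk
    rw [← weightedSqNorm, mul_div_assoc', eq_div_iff (by positivity), hk]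
  · rw [iterate_derivative_eq_zero (by rwa [hdeg])]
    simp
end

section
/- There exists a constant c > 0 independent of p such that for every polynomial q of degree at most p on [-1,1], ‖(1-x²) q'(x)‖_{L²(-1,1)} ≤ c (p+1) ‖(1-x²)^{1/2} q(x)‖_{L²(-1,1)}. -/
/-!
For the weight `1 - x²` on `(-1, 1)`, integration by parts gives
`∫ (1 - x²)² q'² = ⟨L q, q⟩` with `L q = 4 x q' - (1 - x²) q''`, an operator that is symmetric for
`⟨q, r⟩ = ∫ (1 - x²) q r` because `(1 - x²)²` kills the boundary terms. Its eigenpolynomials are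
the Gegenbauer polynomials `dⁿ⁺²/dxⁿ⁺² (x² - 1)ⁿ⁺¹`, of exact degree `n`, with eigenvalues
`n (n + 3)`. Being eigenvectors for distinct eigenvalues of a symmetric operator they are
orthogonal, and they span the polynomials of degree `≤ p`, so `⟨L q, q⟩ ≤ p (p + 3) ⟨q, q⟩`
there; since `p (p + 3) ≤ 4 (p + 1)²`, the constant `c = 2` works.
-/

open Polynomial

namespace Polynomial.Sequence

variable {K : Type*} [Field K] (S : Sequence K)

theorem isUnit_leadingCoeff (i : ℕ) : IsUnit (S i).leadingCoeff :=
  isUnit_iff_ne_zero.mpr (by simp)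

theorem exists_eq_smul_add_of_mem_degreeLT_succ {n : ℕ} {q : K[X]}
    (hq : q ∈ degreeLT K (n + 1)) : ∃ b : K, ∃ s ∈ degreeLT K n, q = b • S n + s := by
  rw [← S.span_degreeLT fun i _ => S.isUnit_leadingCoeff i, ← Order.succ_eq_add_one,
    Order.Iio_succ_eq_insert, Set.image_insert_eq, Submodule.span_insert,
    S.span_degreeLT fun i _ => S.isUnit_leadingCoeff i] at hq
  obtain ⟨y, hy, s, hs, rfl⟩ := Submodule.mem_sup.mp hq
  obtain ⟨b, rfl⟩ := Submodule.mem_span_singleton.mp hy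
  exact ⟨b, s, hs, rfl⟩

variable {β : LinearMap.BilinForm K K[X]} {L : K[X] →ₗ[K] K[X]} {μ : ℕ → K}

theorem bilin_eq_zero_of_mem_degreeLT (hL : β.IsSelfAdjoint L) (hS : ∀ n, L (S n) = μ n • S n)
    (hμ : Function.Injective μ) {n : ℕ} {r : K[X]} (hr : r ∈ degreeLT K n) :
    β (S n) r = 0 := by
  rw [← S.span_degreeLT fun i _ => S.isUnit_leadingCoeff i] at hr
  refine (Submodule.span_le (p := LinearMap.ker (β (S n)))).mpr ?_ hr
  rintro _ ⟨i, hi, rfl⟩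
  have hne : μ n - μ i ≠ 0 := sub_ne_zero.mpr (hμ.ne (Set.mem_Iio.mp hi).ne')
  have h := hL (S n) (S i)
  rw [hS, hS, map_smul, LinearMap.smul_apply, map_smul, smul_eq_mul, smul_eq_mul] at h
  have h' : (μ n - μ i) * β (S n) (S i) = 0 := by linear_combination h
  exact (mul_eq_zero.mp h').resolve_left hne

variable [LinearOrder K] [IsStrictOrderedRing K]

theorem bilin_apply_self_le_of_mem_degreeLT (hβ : β.IsPosSemidef) (hL : β.IsSelfAdjoint L)
    (hS : ∀ n, L (S n) = μ n • S n) (hμ : StrictMono μ) {n p : ℕ} (hnp : n ≤ p + 1)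
    {q : K[X]} (hq : q ∈ degreeLT K n) : β (L q) q ≤ μ p * β q q := by
  induction n generalizing q with
  | zero =>
    obtain rfl : q = 0 := by simpa [mem_degreeLT] using hq
    simp
  | succ n ih =>
    obtain ⟨b, s, hs, rfl⟩ := S.exists_eq_smul_add_of_mem_degreeLT_succ hq
    have h₁ : β (S n) s = 0 := S.bilin_eq_zero_of_mem_degreeLT hL hS hμ.injective hs
    have h₂ : β s (S n) = 0 := by rw [hβ.isSymm.eq]; exact h₁
    have h₃ : β (L s) (S n) = 0 := by rw [hL, hS, map_smul, smul_eq_mul, h₂, mul_zero]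
    have hμn : μ n ≤ μ p := hμ.monotone (by omega)
    have hs' := ih (by omega) hs
    simp only [map_add, map_smul, LinearMap.add_apply, LinearMap.smul_apply, hS, smul_eq_mul, h₁,
      h₂, h₃]
    nlinarith [mul_nonneg (sub_nonneg.mpr hμn)
      (mul_nonneg (sq_nonneg b) (hβ.isNonneg.nonneg (S n))), hβ.isNonneg.nonneg s]

end Polynomial.Sequence

namespace Polynomial

section CommRing

variable {R : Type*} [CommRing R]

theorem iterate_derivative_X_sq_sub_one_mul (g : R[X]) (k : ℕ) :
    derivative^[k + 2] ((X ^ 2 - 1) * g) = (X ^ 2 - 1) * derivative^[k + 2] g +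
      2 * ((k : R[X]) + 2) * X * derivative^[k + 1] g +
      ((k : R[X]) + 2) * ((k : R[X]) + 1) * derivative^[k] g := by
  induction k with
  | zero =>
    rw [Function.iterate_succ_apply', Function.iterate_one]
    simp only [derivative_mul, derivative_sub, derivative_add, derivative_X_sq, derivative_one,
      derivative_X, derivative_ofNat, map_ofNat, Function.iterate_succ_apply',
      Function.iterate_zero_apply, Nat.cast_zero, derivative_zero]
    ring
  | succ k ih =>
    rw [Function.iterate_succ_apply' _ (k + 2), ih]
    simp only [derivative_mul, derivative_sub, derivative_add, derivative_X_sq, derivative_one,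
      derivative_X, derivative_ofNat, map_ofNat, derivative_natCast,
      ← Function.iterate_succ_apply' derivative, Nat.cast_add, Nat.cast_one]
    ring

/-- Rodrigues' formula for the Gegenbauer polynomial `C_n^{(3/2)}` (equivalently the Jacobi
polynomial `P_n^{(1,1)}`), up to a nonzero constant factor. -/
noncomputable def gegenbauer (n : ℕ) : R[X] :=
  derivative^[n + 2] ((X ^ 2 - 1) ^ (n + 1))

theorem gegenbauer_ode (n : ℕ) :
    (X ^ 2 - 1) * derivative (derivative (gegenbauer n : R[X])) + 4 * X * derivative (gegenbauer n)
      = (n : R[X]) * ((n : R[X]) + 3) * gegenbauer n := by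
  -- differentiate `(X² - 1) u' = 2 (n + 1) X u`, where `u = (X² - 1)ⁿ⁺¹`, `n + 3` times
  have hu : (X ^ 2 - 1) * derivative ((X ^ 2 - 1) ^ (n + 1)) =
      ((2 * (n + 1) : ℕ) : R[X]) * ((X ^ 2 - 1) ^ (n + 1) * X) := by
    simp only [derivative_pow_succ, derivative_sub, derivative_one, derivative_X, map_add,
      map_natCast, map_one]
    push_cast
    ring
  have h := congrArg (derivative^[n + 3]) hu
  simp only [iterate_derivative_X_sq_sub_one_mul, iterate_derivative_natCast_mul,
    iterate_derivative_mul_X, ← Function.iterate_succ_apply derivative, nsmul_eq_mul] at h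
  simp only [gegenbauer, ← Function.iterate_succ_apply' derivative]
  simp only [Nat.succ_eq_add_one, add_assoc, Nat.reduceAdd, Nat.add_one_sub_one] at h ⊢
  push_cast at h ⊢
  linear_combination h

theorem monic_X_sq_sub_one : (X ^ 2 - 1 : R[X]).Monic := by
  simpa using monic_X_pow_sub_C (1 : R) two_ne_zero

theorem natDegree_X_sq_sub_one_pow [Nontrivial R] (m : ℕ) :
    ((X ^ 2 - 1 : R[X]) ^ m).natDegree = 2 * m := by
  rw [monic_X_sq_sub_one.natDegree_pow, ← C_1, natDegree_X_pow_sub_C, mul_comm]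

theorem degree_gegenbauer [CharZero R] (n : ℕ) : (gegenbauer n : R[X]).degree = n := by
  have hdeg := natDegree_X_sq_sub_one_pow (R := R) (n + 1)
  refine degree_eq_of_le_of_coeff_ne_zero ?_ ?_
  · refine degree_le_natDegree.trans
      (Nat.cast_le.mpr ((natDegree_iterate_derivative _ _).trans ?_))
    omega
  · rw [gegenbauer, coeff_iterate_derivative, show n + (n + 2) = 2 * (n + 1) by ring, ← hdeg,
      (monic_X_sq_sub_one.pow _).coeff_natDegree, hdeg, nsmul_one]
    exact Nat.cast_ne_zero.mpr (Nat.descFactorial_eq_zero_iff_lt.not.mpr (by omega))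

noncomputable def gegenbauerSeq [CharZero R] : Sequence R := ⟨gegenbauer, degree_gegenbauer⟩

/-- `L q = -((1 - X²)² q')' / (1 - X²)`, the operator attached to the weight `1 - X²`. -/
noncomputable def gegenbauerOp : R[X] →ₗ[R] R[X] where
  toFun q := 4 * X * derivative q - (1 - X ^ 2) * derivative (derivative q)
  map_add' q r := by simp only [map_add]; ring
  map_smul' c q := by simp only [map_smul, RingHom.id_apply, smul_sub, mul_smul_comm]

theorem gegenbauerOp_apply (q : R[X]) :
    gegenbauerOp q = 4 * X * derivative q - (1 - X ^ 2) * derivative (derivative q) := rfl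

theorem gegenbauerOp_gegenbauer (n : ℕ) :
    gegenbauerOp (gegenbauer n : R[X]) = ((n : R) * (n + 3)) • gegenbauer n := by
  rw [gegenbauerOp_apply, smul_eq_C_mul, map_mul, map_add, map_natCast, map_ofNat]
  linear_combination gegenbauer_ode (R := R) n

end CommRing

noncomputable def intervalIntegralₗ (a b : ℝ) : ℝ[X] →ₗ[ℝ] ℝ where
  toFun f := ∫ x in a..b, f.eval x
  map_add' f g := by
    simpa using intervalIntegral.integral_add (f.continuous.intervalIntegrable a b)
      (g.continuous.intervalIntegrable a b)
  map_smul' c f := by simp [intervalIntegral.integral_const_mul]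

theorem intervalIntegralₗ_apply (a b : ℝ) (f : ℝ[X]) :
    intervalIntegralₗ a b f = ∫ x in a..b, f.eval x := rfl

theorem intervalIntegralₗ_derivative (a b : ℝ) (f : ℝ[X]) :
    intervalIntegralₗ a b (derivative f) = f.eval b - f.eval a :=
  intervalIntegral.integral_eq_sub_of_hasDerivAt (fun x _ => f.hasDerivAt x)
    (f.derivative.continuous.intervalIntegrable a b)

noncomputable def weightedInner : LinearMap.BilinForm ℝ ℝ[X] :=
  (LinearMap.mul ℝ ℝ[X]).compr₂ ((intervalIntegralₗ (-1) 1).comp (LinearMap.mulLeft ℝ (1 - X ^ 2)))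

theorem weightedInner_apply (q r : ℝ[X]) :
    weightedInner q r = intervalIntegralₗ (-1) 1 ((1 - X ^ 2) * (q * r)) := rfl

theorem isPosSemidef_weightedInner : weightedInner.IsPosSemidef where
  eq q r := by rw [weightedInner_apply, weightedInner_apply, mul_comm q]
  nonneg q := by
    rw [weightedInner_apply, intervalIntegralₗ_apply]
    refine intervalIntegral.integral_nonneg (by norm_num) fun x hx => ?_
    have : 0 ≤ 1 - x ^ 2 := by nlinarith [hx.1, hx.2]
    simpa [← sq] using mul_nonneg this (sq_nonneg (q.eval x))

theorem weightedInner_gegenbauerOp (q r : ℝ[X]) :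
    weightedInner (gegenbauerOp q) r =
      intervalIntegralₗ (-1) 1 ((1 - X ^ 2) ^ 2 * (derivative q * derivative r)) := by
  have key : (1 - X ^ 2) ^ 2 * (derivative q * derivative r) =
      derivative ((1 - X ^ 2) ^ 2 * derivative q * r) + (1 - X ^ 2) * (gegenbauerOp q * r) := by
    simp only [gegenbauerOp_apply, derivative_mul, derivative_pow, derivative_sub, derivative_one,
      derivative_X, map_natCast]
    push_cast
    ring
  rw [weightedInner_apply, key, map_add, intervalIntegralₗ_derivative]
  simp

theorem isSelfAdjoint_gegenbauerOp : weightedInner.IsSelfAdjoint (gegenbauerOp (R := ℝ)) :=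
  fun q r => by
    rw [weightedInner_gegenbauerOp, isPosSemidef_weightedInner.isSymm.eq,
      weightedInner_gegenbauerOp, mul_comm (derivative q)]

theorem weightedInner_gegenbauerOp_self_le {p : ℕ} {q : ℝ[X]} (hq : q.natDegree ≤ p) :
    weightedInner (gegenbauerOp q) q ≤ p * (p + 3) * weightedInner q q := by
  have hμ : StrictMono fun n : ℕ => (n : ℝ) * (n + 3) := fun m n h => by
    have : (m : ℝ) < n := by exact_mod_cast h
    nlinarith
  refine gegenbauerSeq.bilin_apply_self_le_of_mem_degreeLT isPosSemidef_weightedInner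
    isSelfAdjoint_gegenbauerOp gegenbauerOp_gegenbauer hμ le_rfl ?_
  rw [degreeLT_succ_eq_degreeLE, mem_degreeLE]
  exact degree_le_of_natDegree_le hq

end Polynomial

theorem stmt_7 :
    ∃ c > 0, ∀ (p : ℕ) (q : Polynomial ℝ), q.natDegree ≤ p →
      Real.sqrt (∫ x in (-1:ℝ)..1, ((1 - x^2) * q.derivative.eval x)^2)
        ≤ c * ((p : ℝ) + 1) * Real.sqrt (∫ x in (-1:ℝ)..1, (1 - x^2) * (q.eval x)^2) := by
  refine ⟨2, two_pos, fun p q hq => ?_⟩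
  have hB : ∫ x in (-1:ℝ)..1, ((1 - x ^ 2) * q.derivative.eval x) ^ 2 =
      weightedInner (gegenbauerOp q) q := by
    rw [weightedInner_gegenbauerOp, intervalIntegralₗ_apply]
    congr 1 with x
    simp only [eval_mul, eval_pow, eval_sub, eval_one, eval_X]
    ring
  have hN : ∫ x in (-1:ℝ)..1, (1 - x ^ 2) * (q.eval x) ^ 2 = weightedInner q q := by
    rw [weightedInner_apply, intervalIntegralₗ_apply]
    congr 1 with x
    simp only [eval_mul, eval_pow, eval_sub, eval_one, eval_X]
    ring
  have hq₀ := isPosSemidef_weightedInner.isNonneg.nonneg q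
  have hle : weightedInner (gegenbauerOp q) q ≤ (2 * ((p : ℝ) + 1)) ^ 2 * weightedInner q q := by
    nlinarith [weightedInner_gegenbauerOp_self_le hq, mul_nonneg (Nat.cast_nonneg (α := ℝ) p) hq₀]
  rw [hB, hN, ← Real.sqrt_sq (by positivity : 0 ≤ 2 * ((p : ℝ) + 1)),
    ← Real.sqrt_mul (sq_nonneg _)]
  exact Real.sqrt_le_sqrt hle
end

section
/- Let a < b and let b_{[a,b]}(x) = (x-a)(b-x)/(b-a)² be the quadratic bubble function on [a,b]. Then there exists a constant c > 0 independent of p and of a, b such that for every polynomial q of degree at most p, ‖(b_{[a,b]} q)'‖_{L²(a,b)} ≤ c · (p+1)/(b-a) · ‖b_{[a,b]}^{1/2} q‖_{L²(a,b)}. -/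
open Polynomial Finset

/-!
The affine change of variables `x = a + (b - a) t` turns the bubble into `t (1 - t)` and the
claim into `∫₀¹ ((t (1 - t) q)')² ≤ (p + 1) (p + 2) ∫₀¹ t (1 - t) q²`; then `c = 2` works since
`√((p + 1) (p + 2)) ≤ 2 (p + 1)`.

Write `q = f'` with `deg f ≤ p + 1`. Then `(t (1 - t) q)' = L f` for the Legendre operator
`L f = (t (1 - t) f')'`, and integration by parts gives `∫₀¹ t (1 - t) q² = -∫₀¹ f L f`. The
shifted Legendre polynomials satisfy `L Pₙ = -n (n + 1) Pₙ` (a two-term recurrence for their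
coefficients), so they are orthogonal because `L` is symmetric. Expanding `f = ∑_{n ≤ p+1} cₙ Pₙ`,
`∫ (L f)² = ∑ (n (n + 1))² cₙ² ‖Pₙ‖²` and `-∫ f L f = ∑ n (n + 1) cₙ² ‖Pₙ‖²`, whose ratio is
at most `(p + 1) (p + 2)`.
-/

namespace Polynomial

theorem coeff_shiftedLegendre_succ (n k : ℕ) :
    ((k : ℤ) + 1) ^ 2 * (shiftedLegendre n).coeff (k + 1)
      = ((k : ℤ) * (k + 1) - n * (n + 1)) * (shiftedLegendre n).coeff k := by
  rw [coeff_shiftedLegendre, coeff_shiftedLegendre]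
  rcases lt_or_ge n k with hnk | hkn
  · simp [Nat.choose_eq_zero_of_lt hnk, Nat.choose_eq_zero_of_lt (hnk.trans k.lt_succ_self)]
  obtain ⟨m, rfl⟩ := Nat.exists_eq_add_of_le hkn
  have e1 : ((k + m).choose (k + 1) : ℤ) * (k + 1) = (k + m).choose k * m := by
    have := Nat.choose_succ_right_eq (k + m) k
    rw [Nat.add_sub_cancel_left] at this
    exact_mod_cast this
  have e2 : ((k + m + k : ℕ) + 1 : ℤ) * (k + m + k).choose k
      = (k + m + k + 1).choose (k + 1) * (k + 1) := by
    exact_mod_cast Nat.add_one_mul_choose_eq (k + m + k) k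
  rw [Nat.choose_symm_add (a := k + m) (b := k + 1), Nat.choose_symm_add (a := k + m) (b := k),
    show k + m + (k + 1) = k + m + k + 1 by omega]
  push_cast at e1 e2 ⊢
  linear_combination (-(-1) ^ k * (k + 1) * ((k + m + k + 1).choose (k + 1) : ℤ)) * e1
    + ((-1) ^ k * ((k + m).choose k : ℤ) * m) * e2

theorem Sequence.exists_sum_eq_of_natDegree_le {K : Type*} [Field K] (S : Sequence K) {f : K[X]}
    {N : ℕ} (hf : f.natDegree ≤ N) : ∃ c : ℕ → K, ∑ n ∈ range (N + 1), c n • S n = f := by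
  have hspan : f ∈ Submodule.span K (S '' ↑(range (N + 1))) := by
    rw [coe_range, S.span_degreeLT fun i _ => isUnit_iff_ne_zero.mpr (leadingCoeff_ne_zero.mpr
      (S.ne_zero i)), mem_degreeLT]
    exact (degree_le_natDegree.trans (Nat.cast_le.mpr hf)).trans_lt
      (Nat.cast_lt.mpr N.lt_succ_self)
  exact (Submodule.mem_span_image_finset_iff_exists_fun' K).mp hspan

theorem exists_derivative_eq {K : Type*} [Field K] [CharZero K] (q : K[X]) :
    ∃ f : K[X], derivative f = q ∧ f.natDegree ≤ q.natDegree + 1 := by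
  refine ⟨∑ i ∈ range (q.natDegree + 1), monomial (i + 1) (q.coeff i / (i + 1)), ?_, ?_⟩
  · conv_rhs => rw [q.as_sum_range]
    rw [derivative_sum]
    refine sum_congr rfl fun i _ => ?_
    rw [derivative_monomial]
    push_cast
    rw [div_mul_cancel₀ _ (Nat.cast_add_one_ne_zero i)]
  · refine natDegree_sum_le_of_forall_le _ _ fun i hi => (natDegree_monomial_le _).trans ?_
    simpa [Nat.lt_succ_iff] using hi

end Polynomial

namespace BubbleInverseEstimate

noncomputable def unitIntegral : ℝ[X] →ₗ[ℝ] ℝ where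
  toFun f := ∫ t in (0 : ℝ)..1, f.eval t
  map_add' f g := by
    simpa only [eval_add] using intervalIntegral.integral_add
      (f.continuous.intervalIntegrable 0 1) (g.continuous.intervalIntegrable 0 1)
  map_smul' c f := by simp [intervalIntegral.integral_const_mul]

theorem unitIntegral_apply (f : ℝ[X]) : unitIntegral f = ∫ t in (0 : ℝ)..1, f.eval t := rfl

theorem unitIntegral_derivative (f : ℝ[X]) :
    unitIntegral (derivative f) = f.eval 1 - f.eval 0 :=
  intervalIntegral.integral_deriv_eq_sub' _ (funext fun _ => f.deriv)
    (fun _ _ => f.differentiableAt) (derivative f).continuous.continuousOn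

theorem unitIntegral_mul_self_nonneg (f : ℝ[X]) : 0 ≤ unitIntegral (f * f) :=
  intervalIntegral.integral_nonneg zero_le_one fun t _ => by
    simpa only [eval_mul] using mul_self_nonneg (f.eval t)

noncomputable def bubble : ℝ[X] := X * (1 - X)

noncomputable def legendreOp : ℝ[X] →ₗ[ℝ] ℝ[X] :=
  derivative ∘ₗ LinearMap.mulLeft ℝ bubble ∘ₗ derivative

theorem legendreOp_apply (g : ℝ[X]) : legendreOp g = derivative (bubble * derivative g) := rfl

theorem coeff_legendreOp (g : ℝ[X]) (k : ℕ) :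
    (legendreOp g).coeff k = (k + 1) ^ 2 * g.coeff (k + 1) - k * (k + 1) * g.coeff k := by
  rw [legendreOp_apply, bubble, coeff_derivative, mul_assoc, coeff_X_mul, sub_mul, one_mul,
    coeff_sub]
  rcases k with _ | k
  · simp [coeff_derivative]
  · simp only [coeff_X_mul, coeff_derivative]
    push_cast
    ring

theorem unitIntegral_mul_legendreOp (f g : ℝ[X]) :
    unitIntegral (f * legendreOp g) = -unitIntegral (bubble * derivative f * derivative g) := by
  have h := unitIntegral_derivative (bubble * derivative g * f)
  have hb₀ : bubble.eval 0 = 0 := by simp [bubble]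
  have hb₁ : bubble.eval 1 = 0 := by simp [bubble]
  rw [derivative_mul, map_add, ← legendreOp_apply, eval_mul, eval_mul, eval_mul, eval_mul, hb₀,
    hb₁, mul_comm (legendreOp g), mul_right_comm bubble] at h
  linear_combination h

theorem unitIntegral_mul_legendreOp_comm (f g : ℝ[X]) :
    unitIntegral (f * legendreOp g) = unitIntegral (g * legendreOp f) := by
  rw [unitIntegral_mul_legendreOp, unitIntegral_mul_legendreOp, mul_right_comm]

noncomputable def shiftedLegendreℝ (n : ℕ) : ℝ[X] := (shiftedLegendre n).map (Int.castRingHom ℝ)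

theorem degree_shiftedLegendreℝ (n : ℕ) : (shiftedLegendreℝ n).degree = n := by
  rw [shiftedLegendreℝ, degree_map_eq_of_injective (RingHom.injective_int _),
    degree_shiftedLegendre]

theorem legendreOp_shiftedLegendreℝ (n : ℕ) :
    legendreOp (shiftedLegendreℝ n) = (-(n * (n + 1) : ℝ)) • shiftedLegendreℝ n := by
  ext k
  have h := congrArg (Int.cast : ℤ → ℝ) (coeff_shiftedLegendre_succ n k)
  push_cast at h
  rw [coeff_legendreOp, coeff_smul, shiftedLegendreℝ, coeff_map, coeff_map, smul_eq_mul]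
  simp only [eq_intCast]
  linear_combination h

theorem unitIntegral_shiftedLegendreℝ_mul_of_ne {m n : ℕ} (h : m ≠ n) :
    unitIntegral (shiftedLegendreℝ m * shiftedLegendreℝ n) = 0 := by
  have hsymm := unitIntegral_mul_legendreOp_comm (shiftedLegendreℝ m) (shiftedLegendreℝ n)
  rw [legendreOp_shiftedLegendreℝ, legendreOp_shiftedLegendreℝ, mul_smul_comm, mul_smul_comm,
    map_smul, map_smul, smul_eq_mul, smul_eq_mul, mul_comm (shiftedLegendreℝ n)] at hsymm
  have hne : (m * (m + 1) : ℝ) ≠ n * (n + 1) := by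
    rcases h.lt_or_gt with hmn | hmn
    · exact (mul_lt_mul'' (Nat.cast_lt.mpr hmn) (by gcongr) (by positivity) (by positivity)).ne
    · exact (mul_lt_mul'' (Nat.cast_lt.mpr hmn) (by gcongr) (by positivity) (by positivity)).ne'
  have h0 : (m * (m + 1) - n * (n + 1) : ℝ) *
      unitIntegral (shiftedLegendreℝ m * shiftedLegendreℝ n) = 0 := by
    linear_combination hsymm
  exact (mul_eq_zero.mp h0).resolve_left (sub_ne_zero.mpr hne)

noncomputable def shiftedLegendreSeq : Sequence ℝ where
  elems' := shiftedLegendreℝ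
  degree_eq' := degree_shiftedLegendreℝ

theorem coe_shiftedLegendreSeq : ⇑shiftedLegendreSeq = shiftedLegendreℝ := rfl

theorem unitIntegral_sum_mul_sum (s : Finset ℕ) (c d : ℕ → ℝ) :
    unitIntegral ((∑ n ∈ s, c n • shiftedLegendreℝ n) * ∑ n ∈ s, d n • shiftedLegendreℝ n)
      = ∑ n ∈ s, c n * d n * unitIntegral (shiftedLegendreℝ n * shiftedLegendreℝ n) := by
  rw [sum_mul_sum, map_sum]
  refine sum_congr rfl fun m hm => ?_
  rw [map_sum, sum_eq_single_of_mem m hm fun n _ hnm => ?_]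
  · rw [smul_mul_smul_comm, map_smul, smul_eq_mul]
  · rw [smul_mul_smul_comm, map_smul, unitIntegral_shiftedLegendreℝ_mul_of_ne hnm.symm, smul_zero]

theorem unitIntegral_legendreOp_mul_self_le {f : ℝ[X]} {N : ℕ} (hf : f.natDegree ≤ N) :
    unitIntegral (legendreOp f * legendreOp f)
      ≤ N * (N + 1) * unitIntegral (bubble * derivative f * derivative f) := by
  obtain ⟨c, rfl⟩ := shiftedLegendreSeq.exists_sum_eq_of_natDegree_le hf
  rw [coe_shiftedLegendreSeq]
  have hL : legendreOp (∑ n ∈ range (N + 1), c n • shiftedLegendreℝ n)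
      = ∑ n ∈ range (N + 1), (-(n * (n + 1) : ℝ) * c n) • shiftedLegendreℝ n := by
    rw [map_sum]
    refine sum_congr rfl fun n _ => ?_
    rw [map_smul, legendreOp_shiftedLegendreℝ, smul_smul, mul_comm]
  rw [← neg_neg (unitIntegral (bubble * _ * _)), ← unitIntegral_mul_legendreOp, hL,
    unitIntegral_sum_mul_sum, unitIntegral_sum_mul_sum, ← sum_neg_distrib, mul_sum]
  refine sum_le_sum fun n hn => ?_
  have hnN : (n : ℝ) ≤ N := Nat.cast_le.mpr (Nat.lt_succ_iff.mp (mem_range.mp hn))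
  have hν := unitIntegral_mul_self_nonneg (shiftedLegendreℝ n)
  set ν := unitIntegral (shiftedLegendreℝ n * shiftedLegendreℝ n)
  have heig : (n * (n + 1) : ℝ) ≤ N * (N + 1) := by gcongr
  linear_combination mul_le_mul_of_nonneg_right heig
    (by positivity : (0 : ℝ) ≤ n * (n + 1) * (c n ^ 2 * ν))

theorem unitIntegral_derivative_bubble_mul_sq_le {q : ℝ[X]} {p : ℕ} (hq : q.natDegree ≤ p) :
    unitIntegral (derivative (bubble * q) * derivative (bubble * q))
      ≤ (p + 1) * (p + 2) * unitIntegral (bubble * q * q) := by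
  obtain ⟨f, rfl, hf⟩ := exists_derivative_eq q
  have := unitIntegral_legendreOp_mul_self_le (N := p + 1) (hf.trans (by omega))
  push_cast at this
  rw [legendreOp_apply] at this
  linear_combination this

theorem deriv_bubble_mul_eval_affine {a b : ℝ} (hab : a ≠ b) (q : ℝ[X]) (t : ℝ) :
    deriv (fun y => (y - a) * (b - y) / (b - a) ^ 2 * q.eval y) ((b - a) * t + a)
      = (b - a)⁻¹ * (derivative (bubble * q.comp (C (b - a) * X + C a))).eval t := by
  have hba : b - a ≠ 0 := sub_ne_zero.mpr hab.symm
  have hF : (fun y => (y - a) * (b - y) / (b - a) ^ 2 * q.eval y)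
      = fun y => (bubble * q.comp (C (b - a) * X + C a)).eval ((y - a) / (b - a)) := by
    funext y
    simp only [bubble, eval_mul, eval_sub, eval_one, eval_X, eval_comp, eval_add, eval_C]
    field_simp
    ring_nf
  have hG : HasDerivAt (fun y => (bubble * q.comp (C (b - a) * X + C a)).eval ((y - a) / (b - a)))
      _ ((b - a) * t + a) := ((bubble * q.comp (C (b - a) * X + C a)).hasDerivAt _).comp _
        (((hasDerivAt_id _).sub_const a).div_const (b - a))
  rw [hF, hG.deriv, add_sub_cancel_right, mul_div_cancel_left₀ t hba]
  field_simp

theorem integral_deriv_bubble_mul_sq_le {a b : ℝ} (hab : a < b) {q : ℝ[X]} {p : ℕ}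
    (hq : q.natDegree ≤ p) :
    ∫ x in a..b, (deriv (fun y => (y - a) * (b - y) / (b - a) ^ 2 * q.eval y) x) ^ 2
      ≤ (p + 1) * (p + 2) / (b - a) ^ 2 *
          ∫ x in a..b, (x - a) * (b - x) / (b - a) ^ 2 * q.eval x ^ 2 := by
  have hba : 0 < b - a := sub_pos.mpr hab
  set r := q.comp (C (b - a) * X + C a) with hr_def
  have hr : r.natDegree ≤ p := by
    have : (C (b - a) * X + C a).natDegree ≤ 1 := by compute_degree
    exact natDegree_comp_le.trans ((Nat.mul_le_mul hq this).trans_eq (mul_one p))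
  have hsub (g : ℝ → ℝ) : ∫ x in a..b, g x = (b - a) * ∫ t in (0 : ℝ)..1, g ((b - a) * t + a) := by
    rw [← smul_eq_mul, intervalIntegral.smul_integral_comp_mul_add]
    simp
  have hlhs : ∫ t in (0 : ℝ)..1,
        (deriv (fun y => (y - a) * (b - y) / (b - a) ^ 2 * q.eval y) ((b - a) * t + a)) ^ 2
      = ((b - a) ^ 2)⁻¹ * unitIntegral (derivative (bubble * r) * derivative (bubble * r)) := by
    rw [unitIntegral_apply, ← intervalIntegral.integral_const_mul]
    refine intervalIntegral.integral_congr fun t _ => ?_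
    rw [deriv_bubble_mul_eval_affine hab.ne, ← hr_def, eval_mul, ← inv_pow]
    ring
  have hrhs : ∫ t in (0 : ℝ)..1, ((b - a) * t + a - a) * (b - ((b - a) * t + a)) / (b - a) ^ 2
        * q.eval ((b - a) * t + a) ^ 2 = unitIntegral (bubble * r * r) := by
    rw [unitIntegral_apply]
    refine intervalIntegral.integral_congr fun t _ => ?_
    simp only [r, bubble, eval_mul, eval_sub, eval_one, eval_X, eval_comp, eval_add, eval_C]
    field_simp
    ring
  rw [hsub, hsub, hlhs, hrhs]
  calc _ = (b - a)⁻¹ * unitIntegral (derivative (bubble * r) * derivative (bubble * r)) := by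
        field_simp
    _ ≤ (b - a)⁻¹ * ((p + 1) * (p + 2) * unitIntegral (bubble * r * r)) := by
        gcongr
        exact unitIntegral_derivative_bubble_mul_sq_le hr
    _ = (p + 1) * (p + 2) / (b - a) ^ 2 * ((b - a) * unitIntegral (bubble * r * r)) := by
        field_simp

end BubbleInverseEstimate

open BubbleInverseEstimate in
theorem stmt_8 :
    ∃ c > 0, ∀ (a b : ℝ), a < b → ∀ (p : ℕ) (q : Polynomial ℝ), q.natDegree ≤ p →
      Real.sqrt (∫ x in a..b,
          (deriv (fun y : ℝ => ((y - a) * (b - y) / (b - a)^2) * q.eval y) x)^2)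
        ≤ c * ((p : ℝ) + 1) / (b - a) *
            Real.sqrt (∫ x in a..b, ((x - a) * (b - x) / (b - a)^2) * (q.eval x)^2) := by
  refine ⟨2, two_pos, fun a b hab p q hq => ?_⟩
  have hba : 0 < b - a := sub_pos.mpr hab
  have hconst : √((p + 1) * (p + 2) / (b - a) ^ 2) ≤ 2 * (p + 1) / (b - a) := by
    rw [Real.sqrt_le_iff, div_pow]
    refine ⟨by positivity, by gcongr; nlinarith⟩
  calc _ ≤ √((p + 1) * (p + 2) / (b - a) ^ 2 *
          ∫ x in a..b, (x - a) * (b - x) / (b - a) ^ 2 * q.eval x ^ 2) :=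
        Real.sqrt_le_sqrt (integral_deriv_bubble_mul_sq_le hab hq)
    _ = √((p + 1) * (p + 2) / (b - a) ^ 2) *
          √(∫ x in a..b, (x - a) * (b - x) / (b - a) ^ 2 * q.eval x ^ 2) :=
        Real.sqrt_mul (by positivity) _
    _ ≤ _ := mul_le_mul_of_nonneg_right hconst (Real.sqrt_nonneg _)
end
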